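/- arXiv:1905.13181 — 4 statements merged into one kernel-verified Lean document; each statement's English description precedes it below -/
import Mathlib

section
/- Under the assumption that the linear system y = A x has a unique solution x̃ in {0,1}^n, for any number of measurements m ≥ 1 the vector x̃ is the unique global minimizer of the optimization problem: minimize f(x) = Σ_{i=1}^n (x_i − x_i²) over x ∈ [0,1]^n subject to A x = y; moreover the optimal value of this problem is 0. (Proposition 1 of the paper.) -/
/-!
Each term `xᵢ - xᵢ² = xᵢ (1 - xᵢ)` is nonnegative on `[0,1]` and vanishes exactly at `0` and `1`,
so on the feasible set `f ≥ 0` with equality exactly at the binary solutions, and `x̃` is the only one.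
-/

open Finset

section BinaryPenalty

variable {R : Type*} [CommRing R] [LinearOrder R] [IsStrictOrderedRing R]

lemma sub_sq_self_nonneg {t : R} (ht : t ∈ Set.Icc (0 : R) 1) : 0 ≤ t - t ^ 2 := by
  rw [show t - t ^ 2 = t * (1 - t) by ring]
  exact mul_nonneg ht.1 (sub_nonneg.mpr ht.2)

lemma sub_sq_self_eq_zero_iff {t : R} : t - t ^ 2 = 0 ↔ t = 0 ∨ t = 1 := by
  rw [show t - t ^ 2 = t * (1 - t) by ring, mul_eq_zero, sub_eq_zero, eq_comm (a := 1)]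

lemma mem_Icc_of_eq_zero_or_eq_one {t : R} (ht : t = 0 ∨ t = 1) : t ∈ Set.Icc (0 : R) 1 := by
  rcases ht with rfl | rfl <;> simp

variable {ι : Type*} [Fintype ι]

lemma sum_sub_sq_eq_zero_of_binary {x : ι → R} (hx : ∀ i, x i = 0 ∨ x i = 1) :
    ∑ i, (x i - x i ^ 2) = 0 :=
  sum_eq_zero fun i _ => sub_sq_self_eq_zero_iff.mpr (hx i)

lemma sum_sub_sq_pos_of_not_binary {x : ι → R} (hx : ∀ i, x i ∈ Set.Icc (0 : R) 1)
    (hnb : ¬ ∀ i, x i = 0 ∨ x i = 1) : 0 < ∑ i, (x i - x i ^ 2) := by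
  obtain ⟨j, hj⟩ := not_forall.mp hnb
  have hpos : 0 < x j - x j ^ 2 :=
    (sub_sq_self_nonneg (hx j)).lt_of_ne (Ne.symm (mt sub_sq_self_eq_zero_iff.mp hj))
  exact sum_pos' (fun i _ => sub_sq_self_nonneg (hx i)) ⟨j, mem_univ j, hpos⟩

end BinaryPenalty

theorem stmt_0_general (n m : ℕ)
    (A : Matrix (Fin m) (Fin n) ℝ) (y : Fin m → ℝ) (xt : Fin n → ℝ)
    (hbin : ∀ i, xt i = 0 ∨ xt i = 1) (hsol : A.mulVec xt = y)
    (huniq : ∀ x : Fin n → ℝ, (∀ i, x i = 0 ∨ x i = 1) → A.mulVec x = y → x = xt) :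
    (∀ i, xt i ∈ Set.Icc (0 : ℝ) 1) ∧ A.mulVec xt = y ∧
    (∑ i, (xt i - (xt i) ^ 2)) = 0 ∧
    ∀ x : Fin n → ℝ, (∀ i, x i ∈ Set.Icc (0 : ℝ) 1) → A.mulVec x = y → x ≠ xt →
      (∑ i, (xt i - (xt i) ^ 2)) < ∑ i, (x i - (x i) ^ 2) := by
  have hzero := sum_sub_sq_eq_zero_of_binary hbin
  refine ⟨fun i => mem_Icc_of_eq_zero_or_eq_one (hbin i), hsol, hzero, ?_⟩
  intro x hx hxsol hxne
  rw [hzero]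
  exact sum_sub_sq_pos_of_not_binary hx fun hxb => hxne (huniq x hxb hxsol)

/-- Proposition 1: under uniqueness of the binary solution of `A x = y`,
for any `m ≥ 1` the vector `x̃` is the unique global minimizer of
`min Σ (x_i - x_i²)` over `[0,1]^n` subject to `A x = y`, with optimal value `0`. -/
theorem stmt_0 (n m : ℕ) (hn : 0 < n) (hm : 1 ≤ m)
    (A : Matrix (Fin m) (Fin n) ℝ) (y : Fin m → ℝ) (xt : Fin n → ℝ)
    (hbin : ∀ i, xt i = 0 ∨ xt i = 1) (hsol : A.mulVec xt = y)
    (huniq : ∀ x : Fin n → ℝ, (∀ i, x i = 0 ∨ x i = 1) → A.mulVec x = y → x = xt) :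
    (∀ i, xt i ∈ Set.Icc (0 : ℝ) 1) ∧ A.mulVec xt = y ∧
    (∑ i, (xt i - (xt i) ^ 2)) = 0 ∧
    ∀ x : Fin n → ℝ, (∀ i, x i ∈ Set.Icc (0 : ℝ) 1) → A.mulVec x = y → x ≠ xt →
      (∑ i, (xt i - (xt i) ^ 2)) < ∑ i, (x i - (x i) ^ 2) :=
  stmt_0_general n m A y xt hbin hsol huniq
end

section
/- Define the index sets I_1 = {x_1, z_{1,1}, …, z_{m,1}}, I_l = {x_l, z_{1,l−1}, z_{1,l}, …, z_{m,l−1}, z_{m,l}} for l = 2, …, n−1, and I_n = {x_n, z_{1,n−1}, …, z_{m,n−1}}, viewed as subsets of the set of n + m(n−1) variables {x_1,…,x_n} ∪ {z_{i,j} : 1 ≤ i ≤ m, 1 ≤ j ≤ n−1}. Then: (i) the union of I_1, …, I_n is the whole variable set, and (ii) the running intersection property holds: for every l = 1, …, n−1 there exists s ≤ l such that I_{l+1} ∩ (I_1 ∪ ⋯ ∪ I_l) ⊆ I_s; in fact one may take s = l. (Proposition 3 of the paper.) -/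
/-!
The slack variable `z_{i,j}` lies only in `I_j` and `I_{j+1}`, and `x_l` only in `I_l`. Hence a
variable of `I_{l+1}` that already occurs in some `I_s` with `s ≤ l` is a `z_{i,l}`, which lies
in `I_l`.
-/

namespace SlackChain

variable {n m : ℕ}

/-- The indices are `0`-based: `clique n m l` is the paper's `I_{l+1}`. -/
def clique (n m : ℕ) (l : Fin n) : Set (Fin n ⊕ Fin m × Fin (n - 1)) :=
  {v | v = Sum.inl l ∨
    ∃ (i : Fin m) (j : Fin (n - 1)), v = Sum.inr (i, j) ∧
      ((j : ℕ) = (l : ℕ) ∨ (j : ℕ) + 1 = (l : ℕ))}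

@[simp]
theorem inl_mem_clique {k l : Fin n} :
    (Sum.inl k : Fin n ⊕ Fin m × Fin (n - 1)) ∈ clique n m l ↔ k = l := by
  simp [clique]

@[simp]
theorem inr_mem_clique {i : Fin m} {j : Fin (n - 1)} {l : Fin n} :
    Sum.inr (i, j) ∈ clique n m l ↔ (j : ℕ) = l ∨ (j : ℕ) + 1 = l := by
  simp [clique]

theorem iUnion_clique : ⋃ l, clique n m l = Set.univ := by
  refine Set.eq_univ_of_forall fun v => Set.mem_iUnion.2 ?_
  rcases v with k | ⟨i, j⟩
  · exact ⟨k, inl_mem_clique.2 rfl⟩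
  · exact ⟨⟨j, by omega⟩, inr_mem_clique.2 (Or.inl rfl)⟩

theorem clique_succ_inter_iUnion_le_subset (l : Fin n) (hl : (l : ℕ) + 1 < n) :
    clique n m ⟨l + 1, hl⟩ ∩ ⋃ j : {j : Fin n // (j : ℕ) ≤ l}, clique n m j ⊆ clique n m l := by
  rintro v ⟨hv_succ, hv_prev⟩
  obtain ⟨⟨s, hs⟩, hv_s⟩ := Set.mem_iUnion.1 hv_prev
  rcases v with k | ⟨i, j⟩
  · rw [inl_mem_clique] at hv_succ hv_s
    subst hv_succ hv_s
    simp at hs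
  · rw [inr_mem_clique] at hv_succ hv_s ⊢
    dsimp only at hv_succ hv_s hs
    omega

end SlackChain

theorem stmt_5_general (n m : ℕ)
    (I : Fin n → Set (Fin n ⊕ Fin m × Fin (n - 1)))
    (hI : ∀ l, I l = {v | v = Sum.inl l ∨
      ∃ (i : Fin m) (j : Fin (n - 1)), v = Sum.inr (i, j) ∧
        ((j : ℕ) = (l : ℕ) ∨ (j : ℕ) + 1 = (l : ℕ))}) :
    (⋃ l, I l) = Set.univ ∧
    ∀ (l : Fin n) (hl : (l : ℕ) + 1 < n),
      (∃ s : Fin n, (s : ℕ) ≤ (l : ℕ) ∧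
        I ⟨(l : ℕ) + 1, hl⟩ ∩ (⋃ j : {j : Fin n // (j : ℕ) ≤ (l : ℕ)}, I j) ⊆ I s) ∧
      I ⟨(l : ℕ) + 1, hl⟩ ∩ (⋃ j : {j : Fin n // (j : ℕ) ≤ (l : ℕ)}, I j) ⊆ I l := by
  obtain rfl : I = SlackChain.clique n m := funext hI
  refine ⟨SlackChain.iUnion_clique, fun l hl => ?_⟩
  have h := SlackChain.clique_succ_inter_iUnion_le_subset (m := m) l hl
  exact ⟨⟨l, le_rfl, h⟩, h⟩

/-- Proposition 3: the sets `I₁,…,I_n` (here `0`-indexed: `I_l` contains the variable `x_l`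
together with the slack variables `z_{i,j}` with `j = l - 1` or `j = l`) cover the whole
variable set `Fin n ⊕ (Fin m × Fin (n-1))` and satisfy the running intersection property;
in fact one may take `s = l`. -/
theorem stmt_5 (n m : ℕ) (hn : 2 ≤ n) (hm : 1 ≤ m)
    (I : Fin n → Set (Fin n ⊕ Fin m × Fin (n - 1)))
    (hI : ∀ l, I l = {v | v = Sum.inl l ∨
      ∃ (i : Fin m) (j : Fin (n - 1)), v = Sum.inr (i, j) ∧
        ((j : ℕ) = (l : ℕ) ∨ (j : ℕ) + 1 = (l : ℕ))}) :
    (⋃ l, I l) = Set.univ ∧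
    ∀ (l : Fin n) (hl : (l : ℕ) + 1 < n),
      (∃ s : Fin n, (s : ℕ) ≤ (l : ℕ) ∧
        I ⟨(l : ℕ) + 1, hl⟩ ∩ (⋃ j : {j : Fin n // (j : ℕ) ≤ (l : ℕ)}, I j) ⊆ I s) ∧
      I ⟨(l : ℕ) + 1, hl⟩ ∩ (⋃ j : {j : Fin n // (j : ℕ) ≤ (l : ℕ)}, I j) ⊆ I l :=
  stmt_5_general n m I hI
end

section
/- Suppose the measurements are y = A x̃ + ζ where x̃ ∈ {0,1}^n and ‖ζ‖_∞ ≤ η. Then every global minimizer x* of the noisy problem — minimize f(x) = Σ_{i=1}^n (x_i − x_i²) over x ∈ [0,1]^n subject to ‖A x − y‖_∞ ≤ η — is a binary vector, i.e., every component of x* equals 0 or 1. -/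
/-!
The penalty `x - x²` is nonnegative on `[0,1]` and vanishes exactly at `0` and `1`. The planted
vector `x̃` is feasible, since `A x̃ - y = -ζ`, and binary, so its penalty is `0`; a global
minimizer therefore has penalty at most `0`, which forces each of its coordinates into `{0, 1}`.
-/

open Finset

lemma sub_sq_nonneg_of_mem_Icc {t : ℝ} (ht : t ∈ Set.Icc (0 : ℝ) 1) : 0 ≤ t - t ^ 2 := by
  nlinarith [ht.1, ht.2]

lemma sub_sq_eq_zero_iff {t : ℝ} : t - t ^ 2 = 0 ↔ t = 0 ∨ t = 1 := by
  have hfactor : t - t ^ 2 = t * (1 - t) := by ring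
  rw [hfactor, mul_eq_zero, sub_eq_zero, eq_comm (a := (1 : ℝ))]

section BinaryPenalty

variable {ι : Type*} [Fintype ι]

def binaryPenalty (x : ι → ℝ) : ℝ := ∑ i, (x i - x i ^ 2)

lemma binaryPenalty_eq_zero_of_binary {x : ι → ℝ} (hx : ∀ i, x i = 0 ∨ x i = 1) :
    binaryPenalty x = 0 :=
  sum_eq_zero fun i _ => sub_sq_eq_zero_iff.mpr (hx i)

lemma binary_of_binaryPenalty_nonpos {x : ι → ℝ} (hx : ∀ i, x i ∈ Set.Icc (0 : ℝ) 1)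
    (hpen : binaryPenalty x ≤ 0) : ∀ i, x i = 0 ∨ x i = 1 := by
  have hnonneg : ∀ i ∈ univ, 0 ≤ x i - x i ^ 2 := fun i _ => sub_sq_nonneg_of_mem_Icc (hx i)
  have hzero : binaryPenalty x = 0 := le_antisymm hpen (sum_nonneg hnonneg)
  intro i
  exact sub_sq_eq_zero_iff.mp ((sum_eq_zero_iff_of_nonneg hnonneg).mp hzero i (mem_univ i))

end BinaryPenalty

lemma abs_mulVec_sub_le_of_eq_add {m n : Type*} [Fintype n] {A : Matrix m n ℝ} {x : n → ℝ}
    {ζ y : m → ℝ} {η : ℝ} (hζ : ∀ i, |ζ i| ≤ η) (hy : y = A.mulVec x + ζ) (i : m) :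
    |A.mulVec x i - y i| ≤ η := by
  have hres : A.mulVec x i - y i = -ζ i := by simp [hy]
  rw [hres, abs_neg]
  exact hζ i

theorem stmt_9_general (n m : ℕ)
    (A : Matrix (Fin m) (Fin n) ℝ) (xt : Fin n → ℝ) (ζ : Fin m → ℝ) (η : ℝ)
    (hbin : ∀ i, xt i = 0 ∨ xt i = 1)
    (hζ : ∀ i, |ζ i| ≤ η) (y : Fin m → ℝ) (hy : y = A.mulVec xt + ζ)
    (xstar : Fin n → ℝ) (hfeas : ∀ i, xstar i ∈ Set.Icc (0 : ℝ) 1)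
    (hmin : ∀ x : Fin n → ℝ, (∀ i, x i ∈ Set.Icc (0 : ℝ) 1) →
      (∀ i, |A.mulVec x i - y i| ≤ η) →
      (∑ i, (xstar i - (xstar i) ^ 2)) ≤ ∑ i, (x i - (x i) ^ 2)) :
    ∀ i, xstar i = 0 ∨ xstar i = 1 := by
  have hxt_cube : ∀ i, xt i ∈ Set.Icc (0 : ℝ) 1 := fun i => by
    rcases hbin i with h | h <;> simp [h]
  have hle : binaryPenalty xstar ≤ binaryPenalty xt :=
    hmin xt hxt_cube (abs_mulVec_sub_le_of_eq_add hζ hy)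
  rw [binaryPenalty_eq_zero_of_binary hbin] at hle
  exact binary_of_binaryPenalty_nonpos hfeas hle

/-- Noisy case: if `y = A x̃ + ζ` with `x̃ ∈ {0,1}^n` and `‖ζ‖_∞ ≤ η`, then every global
minimizer of `min Σ (x_i - x_i²)` over `[0,1]^n` subject to `‖A x - y‖_∞ ≤ η` is binary. -/
theorem stmt_9 (n m : ℕ) (hn : 0 < n) (hm : 0 < m)
    (A : Matrix (Fin m) (Fin n) ℝ) (xt : Fin n → ℝ) (ζ : Fin m → ℝ) (η : ℝ)
    (hη : 0 < η) (hbin : ∀ i, xt i = 0 ∨ xt i = 1)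
    (hζ : ∀ i, |ζ i| ≤ η) (y : Fin m → ℝ) (hy : y = A.mulVec xt + ζ)
    (xstar : Fin n → ℝ) (hfeas : ∀ i, xstar i ∈ Set.Icc (0 : ℝ) 1)
    (hconstr : ∀ i, |A.mulVec xstar i - y i| ≤ η)
    (hmin : ∀ x : Fin n → ℝ, (∀ i, x i ∈ Set.Icc (0 : ℝ) 1) →
      (∀ i, |A.mulVec x i - y i| ≤ η) →
      (∑ i, (xstar i - (xstar i) ^ 2)) ≤ ∑ i, (x i - (x i) ^ 2)) :
    ∀ i, xstar i = 0 ∨ xstar i = 1 :=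
  stmt_9_general n m A xt ζ η hbin hζ y hy xstar hfeas hmin
end

section
/- Let α < β be real numbers and assume that the linear system y = A x has a unique solution x̃ in {α,β}^n. Then x̃ is the unique global minimizer of the problem: minimize g(x) = Σ_{i=1}^n (x_i − α)(β − x_i) over x ∈ [α,β]^n subject to A x = y, and the optimal value is 0. (This is the extension of Proposition 1 to a general binary alphabet {α,β}, stated in the Remark of Section 2.) -/
/-!
Each summand `(x_i - α)(β - x_i)` is nonnegative on `[α, β]` and vanishes exactly at the two
endpoints. Hence `g ≥ 0` on the box, `g x = 0` there only for binary `x`, and `g x̃ = 0`; so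
any other feasible `x` in the box is not binary, hence is not a zero of `g`, and `g x̃ < g x`.
-/

section BoxPenalty

variable {R : Type*} [CommRing R] [LinearOrder R] [IsStrictOrderedRing R]

theorem mul_sub_eq_zero_iff {α β t : R} : (t - α) * (β - t) = 0 ↔ t = α ∨ t = β := by
  rw [mul_eq_zero, sub_eq_zero, sub_eq_zero, eq_comm (a := β)]

theorem mul_sub_nonneg_of_mem_Icc {α β t : R} (ht : t ∈ Set.Icc α β) : 0 ≤ (t - α) * (β - t) :=
  mul_nonneg (sub_nonneg.2 ht.1) (sub_nonneg.2 ht.2)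

variable {ι : Type*} [Fintype ι]

-- The objective `g` of the relaxed problem.
def boxPenalty (α β : R) (x : ι → R) : R := ∑ i, (x i - α) * (β - x i)

theorem boxPenalty_eq_zero_of_binary {α β : R} {x : ι → R} (hx : ∀ i, x i = α ∨ x i = β) :
    boxPenalty α β x = 0 :=
  Finset.sum_eq_zero fun i _ => mul_sub_eq_zero_iff.2 (hx i)

theorem boxPenalty_nonneg {α β : R} {x : ι → R} (hx : ∀ i, x i ∈ Set.Icc α β) :
    0 ≤ boxPenalty α β x :=
  Finset.sum_nonneg fun i _ => mul_sub_nonneg_of_mem_Icc (hx i)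

theorem boxPenalty_eq_zero_iff {α β : R} {x : ι → R} (hx : ∀ i, x i ∈ Set.Icc α β) :
    boxPenalty α β x = 0 ↔ ∀ i, x i = α ∨ x i = β := by
  simp only [boxPenalty,
    Finset.sum_eq_zero_iff_of_nonneg fun i _ => mul_sub_nonneg_of_mem_Icc (hx i), Finset.mem_univ, true_implies, mul_sub_eq_zero_iff]

end BoxPenalty

theorem stmt_11_general (n m : ℕ)
    (A : Matrix (Fin m) (Fin n) ℝ) (y : Fin m → ℝ) (α β : ℝ) (hαβ : α < β)
    (xt : Fin n → ℝ) (hbin : ∀ i, xt i = α ∨ xt i = β) (hsol : A.mulVec xt = y)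
    (huniq : ∀ x : Fin n → ℝ, (∀ i, x i = α ∨ x i = β) → A.mulVec x = y → x = xt) :
    (∀ i, xt i ∈ Set.Icc α β) ∧ A.mulVec xt = y ∧
    (∑ i, (xt i - α) * (β - xt i)) = 0 ∧
    ∀ x : Fin n → ℝ, (∀ i, x i ∈ Set.Icc α β) → A.mulVec x = y → x ≠ xt →
      (∑ i, (xt i - α) * (β - xt i)) < ∑ i, (x i - α) * (β - x i) := by
  have hzero : boxPenalty α β xt = 0 := boxPenalty_eq_zero_of_binary hbin
  refine ⟨fun i => ?_, hsol, hzero, fun x hbox hAx hne => ?_⟩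
  · rcases hbin i with h | h <;> rw [h]
    exacts [Set.left_mem_Icc.2 hαβ.le, Set.right_mem_Icc.2 hαβ.le]
  · have hx_ne_zero : boxPenalty α β x ≠ 0 := fun h =>
      hne (huniq x ((boxPenalty_eq_zero_iff hbox).1 h) hAx)
    show boxPenalty α β xt < boxPenalty α β x
    exact hzero ▸ (boxPenalty_nonneg hbox).lt_of_ne' hx_ne_zero

/-- Extension of Proposition 1 to a general binary alphabet `{α,β}`: if `x̃` is the unique
solution of `A x = y` with components in `{α,β}`, then `x̃` is the unique global minimizer
of `min Σ (x_i - α)(β - x_i)` over `[α,β]^n` subject to `A x = y`, with optimal value `0`. -/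
theorem stmt_11 (n m : ℕ) (hn : 0 < n) (hm : 0 < m)
    (A : Matrix (Fin m) (Fin n) ℝ) (y : Fin m → ℝ) (α β : ℝ) (hαβ : α < β)
    (xt : Fin n → ℝ) (hbin : ∀ i, xt i = α ∨ xt i = β) (hsol : A.mulVec xt = y)
    (huniq : ∀ x : Fin n → ℝ, (∀ i, x i = α ∨ x i = β) → A.mulVec x = y → x = xt) :
    (∀ i, xt i ∈ Set.Icc α β) ∧ A.mulVec xt = y ∧
    (∑ i, (xt i - α) * (β - xt i)) = 0 ∧
    ∀ x : Fin n → ℝ, (∀ i, x i ∈ Set.Icc α β) → A.mulVec x = y → x ≠ xt →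
      (∑ i, (xt i - α) * (β - xt i)) < ∑ i, (x i - α) * (β - x i) :=
  stmt_11_general n m A y α β hαβ xt hbin hsol huniq
end
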